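/- Let g(x) = (gᵢⱼ(x)) be a smooth positive-definite symmetric matrix on an open set U ⊆ ℝⁿ satisfying the Hessian symmetry ∂gᵢⱼ/∂xₖ = ∂gᵢₖ/∂xⱼ for all i,j,k. On U × ℝⁿ × ℝⁿ with coordinates (x, y¹, y²) define the 2-form ω_D = Σᵢⱼ gᵢⱼ dy¹ᵢ ∧ dy²ⱼ − Σᵢⱼₗₘₖ y²ₘ g_{mk} g_{il} (∂gˡᵏ/∂xⱼ) dy¹ᵢ ∧ dxⱼ, where (gˡᵏ) is the inverse matrix. Then dω_D = 0. -/

import Mathlib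

/-- Partial derivative in the `j`-th coordinate direction. -/
noncomputable def pd {n : ℕ} (f : (Fin n → ℝ) → ℝ) (x : Fin n → ℝ) (j : Fin n) : ℝ :=
  fderiv ℝ f x (Pi.single j 1)

/-- The total space `U × ℝⁿ × ℝⁿ` with coordinates `(x, y¹, y²)`. -/
abbrev Tot (n : ℕ) := (Fin n → ℝ) × (Fin n → ℝ) × (Fin n → ℝ)

/-- The coordinate direction associated to an index `(α, j)`, where `α = 0` labels the
`x`-coordinates, `α = 1` the `y¹`-coordinates and `α = 2` the `y²`-coordinates. -/
def dir {n : ℕ} (a : Fin 3 × Fin n) : Tot n :=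
  if a.1 = 0 then (Pi.single a.2 1, 0, 0)
  else if a.1 = 1 then (0, Pi.single a.2 1, 0)
  else (0, 0, Pi.single a.2 1)

/-- The coefficient `Σ_{m,k,l} y²ₘ g_{mk} g_{il} ∂gˡᵏ/∂xⱼ`. -/
noncomputable def sCoef {n : ℕ} (g : (Fin n → ℝ) → Matrix (Fin n) (Fin n) ℝ)
    (p : Tot n) (i j : Fin n) : ℝ :=
  ∑ m, ∑ k, ∑ l, p.2.2 m * g p.1 m k * g p.1 i l * pd (fun x => (g x)⁻¹ l k) p.1 j

/-- The components of the dualizing form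
`ω_D = Σᵢⱼ gᵢⱼ dy¹ᵢ∧dy²ⱼ − Σᵢⱼₗₘₖ y²ₘ g_{mk} g_{il} (∂gˡᵏ/∂xⱼ) dy¹ᵢ∧dxⱼ`. -/
noncomputable def omegaD {n : ℕ} (g : (Fin n → ℝ) → Matrix (Fin n) (Fin n) ℝ)
    (p : Tot n) (a b : Fin 3 × Fin n) : ℝ :=
  if a.1 = 1 ∧ b.1 = 2 then g p.1 a.2 b.2
  else if a.1 = 2 ∧ b.1 = 1 then -(g p.1 b.2 a.2)
  else if a.1 = 1 ∧ b.1 = 0 then -(sCoef g p a.2 b.2)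
  else if a.1 = 0 ∧ b.1 = 1 then sCoef g p b.2 a.2
  else 0

noncomputable section StmtAux

/-- infinite smoothness order -/
abbrev Sinf : WithTop ℕ∞ := (⊤ : ℕ∞)

lemma Sinf_add_one_le : Sinf + 1 ≤ Sinf := by unfold Sinf; exact_mod_cast le_top
lemma one_le_Sinf : 1 ≤ Sinf := by unfold Sinf; exact_mod_cast le_top
lemma two_le_Sinf : 2 ≤ Sinf := by
  unfold Sinf
  rw [show (2:WithTop ℕ∞) = ((2:ℕ∞):WithTop ℕ∞) from rfl]
  exact_mod_cast (le_top : (2:ℕ∞) ≤ ⊤)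

variable {n : ℕ} {U : Set (Fin n → ℝ)}

lemma contDiffOn_det' {M : (Fin n → ℝ) → Matrix (Fin n) (Fin n) ℝ}
    (h : ∀ i j, ContDiffOn ℝ Sinf (fun x => M x i j) U) :
    ContDiffOn ℝ Sinf (fun x => (M x).det) U := by
  simp_rw [Matrix.det_apply']
  exact ContDiffOn.sum fun σ _ =>
    contDiffOn_const.mul (contDiffOn_prod fun i _ => h (σ i) i)

lemma contDiffOn_inv' {g : (Fin n → ℝ) → Matrix (Fin n) (Fin n) ℝ}
    (hg : ∀ i j, ContDiffOn ℝ Sinf (fun x => g x i j) U)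
    (hdet : ∀ x ∈ U, (g x).det ≠ 0) (l k : Fin n) :
    ContDiffOn ℝ Sinf (fun x => (g x)⁻¹ l k) U := by
  have he : ∀ x, (g x)⁻¹ l k = ((g x).det)⁻¹ * ((g x).updateRow k (Pi.single l 1)).det := by
    intro x
    rw [Matrix.inv_def, Matrix.smul_apply, Ring.inverse_eq_inv', Matrix.adjugate_apply,
      smul_eq_mul]
  simp_rw [he]
  refine ((contDiffOn_det' hg).inv hdet).mul (contDiffOn_det' fun i j => ?_)
  by_cases h : i = k
  · simp only [Matrix.updateRow_apply, h, if_true]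
    exact contDiffOn_const
  · simp only [Matrix.updateRow_apply, h, if_false]
    exact hg i j

lemma my_diffAt (hU : IsOpen U) {f : (Fin n → ℝ) → ℝ} (h : ContDiffOn ℝ Sinf f U)
    {x} (hx : x ∈ U) : DifferentiableAt ℝ f x :=
  (h.contDiffAt (hU.mem_nhds hx)).differentiableAt (lt_of_lt_of_le zero_lt_one one_le_Sinf).ne'

lemma pd_congr_on (hU : IsOpen U) {f₁ f₂ : (Fin n → ℝ) → ℝ} (h : ∀ y ∈ U, f₁ y = f₂ y)
    {x} (hx : x ∈ U) (j : Fin n) : pd f₁ x j = pd f₂ x j := by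
  unfold pd
  rw [Filter.EventuallyEq.fderiv_eq
    (by filter_upwards [hU.mem_nhds hx] with y hy using h y hy)]

lemma pd_const {x : Fin n → ℝ} {c : ℝ} (j : Fin n) : pd (fun _ => c) x j = 0 := by
  unfold pd; rw [fderiv_fun_const]; simp

lemma pd_sum {ι : Type*} (s : Finset ι) (f : ι → (Fin n → ℝ) → ℝ) {x}
    (h : ∀ i ∈ s, DifferentiableAt ℝ (f i) x) (j : Fin n) :
    pd (fun y => ∑ i ∈ s, f i y) x j = ∑ i ∈ s, pd (f i) x j := by
  unfold pd; rw [fderiv_fun_sum h]; simp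

lemma pd_mul {f₁ f₂ : (Fin n → ℝ) → ℝ} {x} (h₁ : DifferentiableAt ℝ f₁ x)
    (h₂ : DifferentiableAt ℝ f₂ x) (j : Fin n) :
    pd (fun y => f₁ y * f₂ y) x j = f₁ x * pd f₂ x j + f₂ x * pd f₁ x j := by
  unfold pd; rw [fderiv_fun_mul h₁ h₂]; simp

lemma contDiffOn_pd (hU : IsOpen U) {f : (Fin n → ℝ) → ℝ}
    (hf : ContDiffOn ℝ Sinf f U) (j : Fin n) :
    ContDiffOn ℝ Sinf (fun x => pd f x j) U := by
  unfold pd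
  exact (hf.fderiv_of_isOpen hU Sinf_add_one_le).clm_apply contDiffOn_const

lemma pd_comm (hU : IsOpen U) {f : (Fin n → ℝ) → ℝ}
    (hf : ContDiffOn ℝ Sinf f U) {x} (hx : x ∈ U) (j k : Fin n) :
    pd (fun y => pd f y j) x k = pd (fun y => pd f y k) x j := by
  have hcd : ContDiffAt ℝ Sinf f x := hf.contDiffAt (hU.mem_nhds hx)
  have hd : DifferentiableAt ℝ (fderiv ℝ f) x :=
    (hcd.fderiv_right Sinf_add_one_le).differentiableAt (lt_of_lt_of_le zero_lt_one one_le_Sinf).ne'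
  have hsym := hcd.isSymmSndFDerivAt (by rw [minSmoothness_of_isRCLikeNormedField]; exact two_le_Sinf)
  unfold pd
  rw [fderiv_clm_apply hd (differentiableAt_const _),
    fderiv_clm_apply hd (differentiableAt_const _)]
  simp [hsym (Pi.single k 1) (Pi.single j 1)]

end StmtAux
section KeyLemmas

variable {n : ℕ} {U : Set (Fin n → ℝ)} {g : (Fin n → ℝ) → Matrix (Fin n) (Fin n) ℝ}

lemma key_inv (hU : IsOpen U)
    (hsmooth : ∀ i j, ContDiffOn ℝ Sinf (fun x => g x i j) U)
    (hsymm : ∀ x ∈ U, (g x).IsSymm) (hpos : ∀ x ∈ U, (g x).PosDef)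
    {x} (hx : x ∈ U) (i m j : Fin n) :
    ∑ k, ∑ l, g x m k * g x i l * pd (fun y => (g y)⁻¹ l k) x j
      = -(pd (fun y => g y i m) x j) := by
  have hdet : ∀ y ∈ U, (g y).det ≠ 0 := fun y hy => (hpos y hy).det_pos.ne'
  have hinv : ∀ l k, ContDiffOn ℝ Sinf (fun y => (g y)⁻¹ l k) U :=
    contDiffOn_inv' hsmooth hdet
  have hconst : ∀ l m', ∀ y ∈ U,
      (∑ k, (g y)⁻¹ l k * g y m' k) = if l = m' then (1:ℝ) else 0 := by
    intro l m' y hy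
    have h1 : ∀ k, g y m' k = g y k m' := fun k => (hsymm y hy).apply k m'
    calc ∑ k, (g y)⁻¹ l k * g y m' k = ∑ k, (g y)⁻¹ l k * g y k m' := by
          simp_rw [h1]
      _ = ((g y)⁻¹ * g y) l m' := (Matrix.mul_apply).symm
      _ = (1 : Matrix (Fin n) (Fin n) ℝ) l m' := by
          rw [Matrix.nonsing_inv_mul _ (isUnit_iff_ne_zero.mpr (hdet y hy))]
      _ = if l = m' then (1:ℝ) else 0 := Matrix.one_apply
  have hzero : ∀ l m', ∑ k, ((g x)⁻¹ l k * pd (fun y => g y m' k) x j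
      + g x m' k * pd (fun y => (g y)⁻¹ l k) x j) = 0 := by
    intro l m'
    have h0 : pd (fun y => ∑ k, (g y)⁻¹ l k * g y m' k) x j = 0 := by
      rw [pd_congr_on hU (hconst l m') hx j, pd_const]
    rw [pd_sum _ _ (fun k _ => (my_diffAt hU (hinv l k) hx).fun_mul
      (my_diffAt hU (hsmooth m' k) hx)) j] at h0
    rw [← h0]
    exact Finset.sum_congr rfl fun k _ =>
      (pd_mul (my_diffAt hU (hinv l k) hx) (my_diffAt hU (hsmooth m' k) hx) j).symm
  have hkey : ∀ l, ∑ k, g x m k * pd (fun y => (g y)⁻¹ l k) x j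
      = -∑ k, (g x)⁻¹ l k * pd (fun y => g y m k) x j := by
    intro l
    have := hzero l m
    rw [Finset.sum_add_distrib] at this
    linarith
  have hgk : ∀ k, (∑ l, g x i l * (g x)⁻¹ l k) = if i = k then (1:ℝ) else 0 := by
    intro k
    rw [← Matrix.mul_apply, Matrix.mul_nonsing_inv _ (isUnit_iff_ne_zero.mpr (hdet x hx)),
      Matrix.one_apply]
  calc ∑ k, ∑ l, g x m k * g x i l * pd (fun y => (g y)⁻¹ l k) x j
      = ∑ l, g x i l * ∑ k, g x m k * pd (fun y => (g y)⁻¹ l k) x j := by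
        rw [Finset.sum_comm]
        simp only [Finset.mul_sum]
        exact Finset.sum_congr rfl fun l _ => Finset.sum_congr rfl fun k _ => by ring
    _ = ∑ l, ∑ k, -((g x i l * (g x)⁻¹ l k) * pd (fun y => g y m k) x j) := by
        refine Finset.sum_congr rfl fun l _ => ?_
        rw [hkey l, mul_neg, Finset.mul_sum, ← Finset.sum_neg_distrib]
        exact Finset.sum_congr rfl fun k _ => by ring
    _ = ∑ k, -((∑ l, g x i l * (g x)⁻¹ l k) * pd (fun y => g y m k) x j) := by
        rw [Finset.sum_comm]
        exact Finset.sum_congr rfl fun k _ => by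
          rw [Finset.sum_mul, ← Finset.sum_neg_distrib]
    _ = -(pd (fun y => g y m i) x j) := by
        simp_rw [hgk, ite_mul, one_mul, zero_mul]
        simp
    _ = -(pd (fun y => g y i m) x j) := by
        rw [pd_congr_on hU (fun y hy => (hsymm y hy).apply i m) hx j]

lemma sCoef_eq (hU : IsOpen U)
    (hsmooth : ∀ i j, ContDiffOn ℝ Sinf (fun x => g x i j) U)
    (hsymm : ∀ x ∈ U, (g x).IsSymm) (hpos : ∀ x ∈ U, (g x).PosDef)
    {p : Tot n} (hp : p.1 ∈ U) (i j : Fin n) :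
    sCoef g p i j = -∑ m, p.2.2 m * pd (fun x => g x i m) p.1 j := by
  unfold sCoef
  rw [← Finset.sum_neg_distrib]
  refine Finset.sum_congr rfl fun m _ => ?_
  calc ∑ k, ∑ l, p.2.2 m * g p.1 m k * g p.1 i l * pd (fun x => (g x)⁻¹ l k) p.1 j
      = p.2.2 m * ∑ k, ∑ l, g p.1 m k * g p.1 i l * pd (fun x => (g x)⁻¹ l k) p.1 j := by
        simp only [Finset.mul_sum]
        exact Finset.sum_congr rfl fun k _ => Finset.sum_congr rfl fun l _ => by ring
    _ = -(p.2.2 m * pd (fun x => g x i m) p.1 j) := by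
        rw [key_inv hU hsmooth hsymm hpos hp i m j]; ring

end KeyLemmas
section TotDeriv

variable {n : ℕ}

lemma fderiv_comp_fst {f : (Fin n → ℝ) → ℝ} {p : Tot n} (hf : DifferentiableAt ℝ f p.1)
    (v : Tot n) : fderiv ℝ (fun q : Tot n => f q.1) p v = fderiv ℝ f p.1 v.1 := by
  have h : (fun q : Tot n => f q.1) = f ∘ Prod.fst := rfl
  rw [h, fderiv_comp _ hf differentiableAt_fst, fderiv_fst]
  rfl

noncomputable def clmY2 (m : Fin n) : Tot n →L[ℝ] ℝ :=
  (ContinuousLinearMap.proj m).comp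
    ((ContinuousLinearMap.snd ℝ (Fin n → ℝ) (Fin n → ℝ)).comp
      (ContinuousLinearMap.snd ℝ (Fin n → ℝ) ((Fin n → ℝ) × (Fin n → ℝ))))

lemma clmY2_eq (m : Fin n) : (fun q : Tot n => q.2.2 m) = ⇑(clmY2 m) := rfl

lemma fderiv_y2sum {h : Fin n → (Fin n → ℝ) → ℝ} {p : Tot n}
    (hh : ∀ m, DifferentiableAt ℝ (h m) p.1) (v : Tot n) :
    fderiv ℝ (fun q : Tot n => ∑ m, q.2.2 m * h m q.1) p v
      = ∑ m, (v.2.2 m * h m p.1 + p.2.2 m * fderiv ℝ (h m) p.1 v.1) := by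
  have hdy : ∀ m : Fin n, DifferentiableAt ℝ (fun q : Tot n => q.2.2 m) p := fun m => by
    rw [clmY2_eq m]; exact (clmY2 m).differentiableAt
  have hdh : ∀ m : Fin n, DifferentiableAt ℝ (fun q : Tot n => h m q.1) p := fun m =>
    (hh m).comp p differentiableAt_fst
  rw [fderiv_fun_sum (fun m _ => (hdy m).fun_mul (hdh m)), ContinuousLinearMap.sum_apply]
  refine Finset.sum_congr rfl fun m _ => ?_
  rw [fderiv_fun_mul (hdy m) (hdh m)]
  simp only [ContinuousLinearMap.add_apply, ContinuousLinearMap.coe_smul',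
    Pi.smul_apply, smul_eq_mul]
  have h1 : fderiv ℝ (fun q : Tot n => q.2.2 m) p v = v.2.2 m := by
    rw [clmY2_eq m, ContinuousLinearMap.fderiv]; rfl
  have h2 : fderiv ℝ (fun q : Tot n => h m q.1) p v = fderiv ℝ (h m) p.1 v.1 :=
    fderiv_comp_fst (hh m) v
  rw [h1, h2]
  ring

end TotDeriv
section Om

variable {n : ℕ} {U : Set (Fin n → ℝ)} {g : (Fin n → ℝ) → Matrix (Fin n) (Fin n) ℝ}

/-- simplified form of `omegaD` valid on `U` -/
noncomputable def om' (g : (Fin n → ℝ) → Matrix (Fin n) (Fin n) ℝ) (q : Tot n)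
    (a b : Fin 3 × Fin n) : ℝ :=
  if a.1 = 1 ∧ b.1 = 2 then g q.1 a.2 b.2
  else if a.1 = 2 ∧ b.1 = 1 then -(g q.1 b.2 a.2)
  else if a.1 = 1 ∧ b.1 = 0 then ∑ m, q.2.2 m * pd (fun x => g x a.2 m) q.1 b.2
  else if a.1 = 0 ∧ b.1 = 1 then -∑ m, q.2.2 m * pd (fun x => g x b.2 m) q.1 a.2
  else 0

/-- value of the derivative of the component `(a,b)` of `om'` in direction `dir c` -/
noncomputable def Dval (g : (Fin n → ℝ) → Matrix (Fin n) (Fin n) ℝ) (p : Tot n)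
    (a b c : Fin 3 × Fin n) : ℝ :=
  if a.1 = 1 ∧ b.1 = 2 ∧ c.1 = 0 then pd (fun x => g x a.2 b.2) p.1 c.2
  else if a.1 = 2 ∧ b.1 = 1 ∧ c.1 = 0 then -pd (fun x => g x b.2 a.2) p.1 c.2
  else if a.1 = 1 ∧ b.1 = 0 ∧ c.1 = 0 then
    ∑ m, p.2.2 m * pd (fun x => pd (fun y => g y a.2 m) x b.2) p.1 c.2
  else if a.1 = 1 ∧ b.1 = 0 ∧ c.1 = 2 then pd (fun x => g x a.2 c.2) p.1 b.2
  else if a.1 = 0 ∧ b.1 = 1 ∧ c.1 = 0 then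
    -∑ m, p.2.2 m * pd (fun x => pd (fun y => g y b.2 m) x a.2) p.1 c.2
  else if a.1 = 0 ∧ b.1 = 1 ∧ c.1 = 2 then -pd (fun x => g x b.2 c.2) p.1 a.2
  else 0

lemma omegaD_eq_om' (hU : IsOpen U)
    (hsmooth : ∀ i j, ContDiffOn ℝ Sinf (fun x => g x i j) U)
    (hsymm : ∀ x ∈ U, (g x).IsSymm) (hpos : ∀ x ∈ U, (g x).PosDef)
    {q : Tot n} (hq : q.1 ∈ U) (a b : Fin 3 × Fin n) :
    omegaD g q a b = om' g q a b := by
  unfold omegaD om'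
  simp only [sCoef_eq hU hsmooth hsymm hpos hq, neg_neg]

lemma fderiv_om' (hU : IsOpen U)
    (hsmooth : ∀ i j, ContDiffOn ℝ Sinf (fun x => g x i j) U)
    {p : Tot n} (hp : p.1 ∈ U) (a b c : Fin 3 × Fin n) :
    fderiv ℝ (fun q => om' g q a b) p (dir c) = Dval g p a b c := by
  obtain ⟨a1, a2⟩ := a; obtain ⟨b1, b2⟩ := b; obtain ⟨c1, c2⟩ := c
  have tri : ∀ z : Fin 3, z = 0 ∨ z = 1 ∨ z = 2 := by decide
  have hg : ∀ i m, DifferentiableAt ℝ (fun x => g x i m) p.1 :=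
    fun i m => my_diffAt hU (hsmooth i m) hp
  have hpd : ∀ i m j, DifferentiableAt ℝ (fun x => pd (fun y => g y i m) x j) p.1 :=
    fun i m j => my_diffAt hU (contDiffOn_pd hU (hsmooth i m) j) hp
  rcases tri a1 with ha|ha|ha <;> subst ha <;> rcases tri b1 with hb|hb|hb <;> subst hb
  -- (0,0)
  · simp [om', Dval]
  -- (0,1)
  · have hrw : ∀ v : Tot n, fderiv ℝ
        (fun q : Tot n => -∑ x : Fin n, q.2.2 x * pd (fun y => g y b2 x) q.1 a2) p v
        = -∑ x : Fin n, (v.2.2 x * pd (fun y => g y b2 x) p.1 a2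
            + p.2.2 x * fderiv ℝ (fun z => pd (fun y => g y b2 x) z a2) p.1 v.1) := by
      intro v
      rw [fderiv_fun_neg, ContinuousLinearMap.neg_apply, fderiv_y2sum (fun m => hpd b2 m a2)]
    rw [show (fun q => om' g q (0, a2) (1, b2))
      = (fun q : Tot n => -∑ x : Fin n, q.2.2 x * pd (fun y => g y b2 x) q.1 a2) from
      by funext q; simp [om']]
    rcases tri c1 with hc|hc|hc <;> subst hc <;> rw [hrw] <;>
      simp [dir, Dval, pd, Pi.single_apply, ite_mul]
  -- (0,2)
  · simp [om', Dval]
  -- (1,0)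
  · have hrw : ∀ v : Tot n, fderiv ℝ
        (fun q : Tot n => ∑ x : Fin n, q.2.2 x * pd (fun y => g y a2 x) q.1 b2) p v
        = ∑ x : Fin n, (v.2.2 x * pd (fun y => g y a2 x) p.1 b2
            + p.2.2 x * fderiv ℝ (fun z => pd (fun y => g y a2 x) z b2) p.1 v.1) := by
      intro v
      rw [fderiv_y2sum (fun m => hpd a2 m b2)]
    rw [show (fun q => om' g q (1, a2) (0, b2))
      = (fun q : Tot n => ∑ x : Fin n, q.2.2 x * pd (fun y => g y a2 x) q.1 b2) from
      by funext q; simp [om']]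
    rcases tri c1 with hc|hc|hc <;> subst hc <;> rw [hrw] <;>
      simp [dir, Dval, pd, Pi.single_apply, ite_mul]
  -- (1,1)
  · simp [om', Dval]
  -- (1,2)
  · have hrw : ∀ v : Tot n, fderiv ℝ (fun q : Tot n => g q.1 a2 b2) p v
        = fderiv ℝ (fun x => g x a2 b2) p.1 v.1 := fun v => fderiv_comp_fst (hg a2 b2) v
    rw [show (fun q => om' g q (1, a2) (2, b2)) = (fun q : Tot n => g q.1 a2 b2) from
      by funext q; simp [om']]
    rcases tri c1 with hc|hc|hc <;> subst hc <;> rw [hrw] <;>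
      simp [dir, Dval, pd]
  -- (2,0)
  · simp [om', Dval]
  -- (2,1)
  · have hrw : ∀ v : Tot n, fderiv ℝ (fun q : Tot n => -g q.1 b2 a2) p v
        = -fderiv ℝ (fun x => g x b2 a2) p.1 v.1 := by
      intro v
      rw [fderiv_fun_neg, ContinuousLinearMap.neg_apply, fderiv_comp_fst (hg b2 a2)]
    rw [show (fun q => om' g q (2, a2) (1, b2)) = (fun q : Tot n => -g q.1 b2 a2) from
      by funext q; simp [om']]
    rcases tri c1 with hc|hc|hc <;> subst hc <;> rw [hrw] <;>
      simp [dir, Dval, pd]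
  -- (2,2)
  · simp [om', Dval]

end Om

/-- for a smooth positive-definite symmetric matrix field `g` on an open
`U ⊆ ℝⁿ` satisfying the Hessian symmetry `∂gᵢⱼ/∂xₖ = ∂gᵢₖ/∂xⱼ`, the 2-form `ω_D` on
`U × ℝⁿ × ℝⁿ` is closed: the cyclic sum of coordinate partial derivatives of its
components vanishes. -/
theorem stmt_18 {n : ℕ} (U : Set (Fin n → ℝ)) (hU : IsOpen U)
    (g : (Fin n → ℝ) → Matrix (Fin n) (Fin n) ℝ)
    (hsmooth : ∀ i j, ContDiffOn ℝ (⊤ : ℕ∞) (fun x => g x i j) U)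
    (hsymm : ∀ x ∈ U, (g x).IsSymm)
    (hpos : ∀ x ∈ U, (g x).PosDef)
    (hhess : ∀ x ∈ U, ∀ i j k : Fin n,
      pd (fun y => g y i j) x k = pd (fun y => g y i k) x j) :
    ∀ p : Tot n, p.1 ∈ U → ∀ a b c : Fin 3 × Fin n,
      fderiv ℝ (fun q => omegaD g q b c) p (dir a)
        + fderiv ℝ (fun q => omegaD g q c a) p (dir b)
        + fderiv ℝ (fun q => omegaD g q a b) p (dir c) = 0 := by
  intro p hp a b c
  have hsm : ∀ i j, ContDiffOn ℝ Sinf (fun x => g x i j) U :=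
    fun i j => (hsmooth i j).of_le (by simp)
  have key : ∀ a b c : Fin 3 × Fin n,
      fderiv ℝ (fun q => omegaD g q a b) p (dir c) = Dval g p a b c := by
    intro a b c
    have hev : (fun q => omegaD g q a b) =ᶠ[nhds p] (fun q => om' g q a b) := by
      filter_upwards [(hU.preimage continuous_fst).mem_nhds
        (show p ∈ Prod.fst ⁻¹' U from hp)] with q hq
      exact omegaD_eq_om' hU hsm hsymm hpos hq a b
    rw [hev.fderiv_eq]
    exact fderiv_om' hU hsm hp a b c
  rw [key b c a, key c a b, key a b c]
  have schwarz : ∀ i m j k : Fin n,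
      pd (fun x => pd (fun y => g y i m) x j) p.1 k
        = pd (fun x => pd (fun y => g y i m) x k) p.1 j :=
    fun i m j k => pd_comm hU (hsm i m) hp j k
  obtain ⟨a1,a2⟩ := a; obtain ⟨b1,b2⟩ := b; obtain ⟨c1,c2⟩ := c
  have tri : ∀ z : Fin 3, z = 0 ∨ z = 1 ∨ z = 2 := by decide
  have hsum : ∀ i j k : Fin n,
      ∑ x : Fin n, p.2.2 x * pd (fun z => pd (fun y => g y i x) z j) p.1 k
        = ∑ x : Fin n, p.2.2 x * pd (fun z => pd (fun y => g y i x) z k) p.1 j :=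
    fun i j k => Finset.sum_congr rfl fun m _ => by rw [schwarz]
  rcases tri a1 with h|h|h <;> subst h <;> rcases tri b1 with h|h|h <;> subst h <;>
    rcases tri c1 with h|h|h <;> subst h <;> simp [Dval] <;>
    first
      | linear_combination (hsum b2 c2 a2)
      | linear_combination (-1 : ℝ) * hsum c2 b2 a2
      | linear_combination (-1 : ℝ) * hsum a2 c2 b2
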